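/- Given polynomial-time sets X_e, X_i ⊆ ℕ, define trees T_e and T_i as subtrees of {0,1}*: T_e contains 1^y for all y, and 1^x 0 for each x ∈ X_e (similarly T_i). Then X_e ⊆ X_i if and only if there is a root-preserving embedding of T_e into T_i. -/

import Mathlib

/-!
A root-preserving embedding commutes with `dropLast`, so it preserves the length of strings.
The tree `T_X` has the two strings `1^n 0` and `1^(n+1)` of length `n + 1` exactly when `n ∈ X`,
and only `1^(n+1)` otherwise; hence an injective length-preserving map `T_X → T_Y` forces
`n ∈ Y` for every `n ∈ X`. Conversely, if `X ⊆ Y` then `T_X ⊆ T_Y` and the identity embeds.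
-/

/-- A set of natural numbers (given by its characteristic function) is polynomial time. -/
def PolyTimeSet (X : ℕ → Bool) : Prop :=
  Nonempty (Turing.TM2ComputableInPolyTime Computability.encodingNatBool.encode
    Computability.encodingBoolBool.encode X)

/-- `f` is a root-preserving embedding of the subtree `T` into the subtree `S`: an injective
map sending the root to the root and preserving the predecessor `List.dropLast`. -/
def IsRootEmbedding {α : Type*} (T S : Set (List α)) (f : List α → List α) : Prop :=
  Set.MapsTo f T S ∧ Set.InjOn f T ∧ f [] = [] ∧ ∀ w ∈ T, f w.dropLast = (f w).dropLast

/-- The subtree of `{0,1}*` associated to a set `X ⊆ ℕ`: all strings `1^y`, together with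
`1^x 0` for each `x ∈ X`. -/
def setTree (X : ℕ → Bool) : Set (List (Fin 2)) :=
  {w | (∃ y, w = List.replicate y (1 : Fin 2)) ∨
       (∃ x, X x = true ∧ w = List.replicate x (1 : Fin 2) ++ [(0 : Fin 2)])}

section RootEmbedding

variable {α : Type*} {T S : Set (List α)} {f : List α → List α}

theorem isRootEmbedding_id (h : T ⊆ S) : IsRootEmbedding T S id :=
  ⟨h, Set.injOn_id T, rfl, fun _ _ => rfl⟩

theorem IsRootEmbedding.length_eq (hf : IsRootEmbedding T S f)
    (hT : ∀ w ∈ T, w.dropLast ∈ T) {w : List α} (hw : w ∈ T) : (f w).length = w.length := by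
  obtain ⟨-, hinj, hnil, hdrop⟩ := hf
  induction h : w.length generalizing w with
  | zero => simp_all [List.length_eq_zero_iff]
  | succ n ih =>
    have hfw : f w ≠ [] := by
      intro hfw
      have hw' : w = w.dropLast :=
        hinj hw (hT w hw) (by rw [hdrop w hw, hfw, List.dropLast_nil])
      have := congrArg List.length hw'
      simp only [List.length_dropLast] at this
      omega
    have hlen := ih (hT w hw) (by simp [h])
    rw [hdrop w hw, List.length_dropLast] at hlen
    have := List.length_pos_of_ne_nil hfw
    omega

end RootEmbedding

section SetTree

variable {X Y : ℕ → Bool} {w : List (Fin 2)}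

theorem dropLast_mem_setTree (hw : w ∈ setTree X) : w.dropLast ∈ setTree X := by
  rcases hw with ⟨y, rfl⟩ | ⟨x, -, rfl⟩
  · exact Or.inl ⟨y - 1, List.dropLast_replicate⟩
  · exact Or.inl ⟨x, by simp⟩

theorem setTree_mono (h : ∀ n, X n = true → Y n = true) : setTree X ⊆ setTree Y := by
  rintro w (⟨y, rfl⟩ | ⟨x, hx, rfl⟩)
  · exact Or.inl ⟨y, rfl⟩
  · exact Or.inr ⟨x, h x hx, rfl⟩

theorem eq_replicate_of_mem_setTree {n : ℕ} (hn : Y n = false) (hw : w ∈ setTree Y)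
    (hlen : w.length = n + 1) : w = List.replicate (n + 1) 1 := by
  rcases hw with ⟨y, rfl⟩ | ⟨x, hx, rfl⟩
  · rw [List.length_replicate] at hlen
    rw [hlen]
  · obtain rfl : x = n := by simpa using hlen
    simp_all

theorem replicate_append_zero_ne_replicate (n : ℕ) :
    List.replicate n (1 : Fin 2) ++ [0] ≠ List.replicate (n + 1) 1 := by
  rw [List.replicate_succ']
  intro h
  simpa using List.append_cancel_left h

end SetTree

theorem subset_iff_rootEmbedding_general (X Y : ℕ → Bool) :
    (∀ n, X n = true → Y n = true) ↔
      ∃ f, IsRootEmbedding (setTree X) (setTree Y) f := by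
  refine ⟨fun h => ⟨id, isRootEmbedding_id (setTree_mono h)⟩, ?_⟩
  rintro ⟨f, hf⟩ n hn
  by_contra hYn
  rw [Bool.not_eq_true] at hYn
  have ha : List.replicate n 1 ++ [0] ∈ setTree X := Or.inr ⟨n, hn, rfl⟩
  have hb : List.replicate (n + 1) 1 ∈ setTree X := Or.inl ⟨n + 1, rfl⟩
  have hlen {w} (hw : w ∈ setTree X) : (f w).length = w.length :=
    hf.length_eq (fun _ => dropLast_mem_setTree) hw
  have hfa := eq_replicate_of_mem_setTree hYn (hf.1 ha) (by simp [hlen ha])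
  have hfb := eq_replicate_of_mem_setTree hYn (hf.1 hb) (by simp [hlen hb])
  exact replicate_append_zero_ne_replicate n (hf.2.1 ha hb (hfa.trans hfb.symm))

/-- For polynomial-time sets `X` and `Y`, `X ⊆ Y` iff there is a root-preserving embedding
of `T_X` into `T_Y`. -/
theorem subset_iff_rootEmbedding (X Y : ℕ → Bool)
    (hX : PolyTimeSet X) (hY : PolyTimeSet Y) :
    (∀ n, X n = true → Y n = true) ↔
      ∃ f, IsRootEmbedding (setTree X) (setTree Y) f :=
  subset_iff_rootEmbedding_general X Y
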